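/- Let X and Y be smooth normed spaces over 𝔽 with unique compatible semi-inner products, and let f : X → Y satisfy |[f(x), f(y)]| = |[x, y]| for all x, y ∈ X. If x, y, z ∈ X are pairwise Birkhoff–James orthogonal unit vectors, then f(x), f(y), f(z) are linearly independent. -/

import Mathlib

open RCLike

/-- A support functional at `x`: a norm-one continuous linear functional with `φ x = ‖x‖`. -/
def SuppFunc (𝕜 : Type*) [RCLike 𝕜] {X : Type*} [NormedAddCommGroup X] [NormedSpace 𝕜 X]
    (x : X) (φ : X →L[𝕜] 𝕜) : Prop :=
  ‖φ‖ = 1 ∧ φ x = (‖x‖ : 𝕜)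

/-- `X` is smooth at `x` if there is a unique support functional at `x`. -/
def NormSmoothAt (𝕜 : Type*) [RCLike 𝕜] {X : Type*} [NormedAddCommGroup X] [NormedSpace 𝕜 X]
    (x : X) : Prop := ∃! φ : X →L[𝕜] 𝕜, SuppFunc 𝕜 x φ

/-- `X` is smooth if it is smooth at every nonzero point. -/
def NormSmooth (𝕜 : Type*) (X : Type*) [RCLike 𝕜] [NormedAddCommGroup X] [NormedSpace 𝕜 X] :
    Prop := ∀ x : X, x ≠ 0 → NormSmoothAt 𝕜 x

/-- `sip` is the canonical semi-inner product `[u,v] = ‖v‖ * φ_v u` built from support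
functionals (on a smooth space this pins `sip` down uniquely). -/
def IsCompatSIP (𝕜 : Type*) {X : Type*} [RCLike 𝕜] [NormedAddCommGroup X] [NormedSpace 𝕜 X]
    (sip : X → X → 𝕜) : Prop :=
  (∀ u : X, sip u 0 = 0) ∧
  ∀ (u v : X) (φ : X →L[𝕜] 𝕜), SuppFunc 𝕜 v φ → sip u v = (‖v‖ : 𝕜) * φ u

/-- Birkhoff–James orthogonality: `x ⊥ y` iff `‖x + a • y‖ ≥ ‖x‖` for all scalars. -/
def BJOrth (𝕜 : Type*) {X : Type*} [RCLike 𝕜] [NormedAddCommGroup X] [NormedSpace 𝕜 X]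
    (x y : X) : Prop := ∀ a : 𝕜, ‖x‖ ≤ ‖x + a • y‖

/-- A semi-inner product compatible with the norm: additive and homogeneous in the first
variable, conjugate-homogeneous in the second, positive definite, Cauchy–Schwarz, and
`[x,x] = ‖x‖²`. -/
def IsSIP (𝕜 : Type*) {X : Type*} [RCLike 𝕜] [NormedAddCommGroup X] [NormedSpace 𝕜 X]
    (sip : X → X → 𝕜) : Prop :=
  (∀ x y z : X, sip (x + y) z = sip x z + sip y z) ∧
  (∀ (a : 𝕜) (x y : X), sip (a • x) y = a * sip x y) ∧
  (∀ (a : 𝕜) (x y : X), sip x (a • y) = (starRingEnd 𝕜) a * sip x y) ∧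
  (∀ x : X, x ≠ 0 → 0 < re (sip x x) ∧ im (sip x x) = 0) ∧
  (∀ x y : X, ‖sip x y‖ ≤ Real.sqrt (re (sip x x)) * Real.sqrt (re (sip y y))) ∧
  (∀ x : X, sip x x = (‖x‖ : 𝕜) ^ 2)

/-!
If `x ⊥ y` in the Birkhoff–James sense, Hahn–Banach in `X ⧸ span {y}` gives a support
functional at `x` vanishing at `y`, so `[y, x] = 0`. Since `f` preserves `|[·, ·]|`, it preserves
norms and `[f y, f x] = 0`, so every support functional `ψₓ` at `f x` vanishes at `f y`
(and likewise at `f z`, and `ψ_y` at `f z`). The triangular pattern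
`ψₓ (f x) ≠ 0 = ψₓ (f y) = ψₓ (f z)`, `ψ_y (f y) ≠ 0 = ψ_y (f z)`, `f z ≠ 0` forces
linear independence.
-/

section NormedSpace

variable {𝕜 : Type*} [RCLike 𝕜] {X : Type*} [NormedAddCommGroup X] [NormedSpace 𝕜 X]

theorem SuppFunc.of_norm_le_one {x : X} {φ : X →L[𝕜] 𝕜} (hx : x ≠ 0) (hφ : ‖φ‖ ≤ 1)
    (hφx : φ x = ‖x‖) : SuppFunc 𝕜 x φ := by
  refine ⟨le_antisymm hφ ?_, hφx⟩
  have hx' : 0 < ‖x‖ := norm_pos_iff.2 hx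
  have := φ.le_opNorm x
  rw [hφx, RCLike.norm_ofReal, abs_of_pos hx'] at this
  exact le_of_mul_le_mul_right (by simpa using this) hx'

theorem SuppFunc.apply_ne_zero {x : X} {φ : X →L[𝕜] 𝕜} (hφ : SuppFunc 𝕜 x φ) (hx : x ≠ 0) :
    φ x ≠ 0 := by
  rwa [hφ.2, RCLike.ofReal_ne_zero, norm_ne_zero_iff]

theorem exists_suppFunc {x : X} (hx : x ≠ 0) : ∃ φ : X →L[𝕜] 𝕜, SuppFunc 𝕜 x φ :=
  exists_dual_vector 𝕜 x (norm_ne_zero_iff.2 hx)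

/-- Hahn–Banach applied in `X ⧸ span {y}`, where `x ⊥ y` says exactly that `x` keeps its norm. -/
theorem BJOrth.exists_suppFunc_apply_eq_zero {x y : X} (hx : x ≠ 0) (h : BJOrth 𝕜 x y) :
    ∃ φ : X →L[𝕜] 𝕜, SuppFunc 𝕜 x φ ∧ φ y = 0 := by
  set S : Submodule 𝕜 X := 𝕜 ∙ y
  have : IsClosed (S : Set X) := S.closed_of_finiteDimensional
  have hπx : ‖S.mkQL x‖ = ‖x‖ := by
    refine le_antisymm (Submodule.Quotient.norm_mk_le S x) ?_
    refine QuotientAddGroup.le_norm_iff.2 fun m hm => ?_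
    obtain ⟨a, ha⟩ := Submodule.mem_span_singleton.1
      ((Submodule.Quotient.eq S).1 (hm.trans (Submodule.mkQL_apply S x)))
    rw [show m = x + a • y by rw [ha, add_sub_cancel]]
    exact h a
  obtain ⟨g, hg, hgx⟩ := exists_dual_vector 𝕜 (S.mkQL x) (by rw [hπx]; exact norm_ne_zero_iff.2 hx)
  refine ⟨g ∘L S.mkQL, .of_norm_le_one hx ?_ ?_, ?_⟩
  · refine ContinuousLinearMap.opNorm_le_bound _ zero_le_one fun m => ?_
    calc ‖g (S.mkQL m)‖ ≤ ‖g‖ * ‖S.mkQL m‖ := g.le_opNorm _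
      _ ≤ 1 * ‖m‖ := by rw [hg, one_mul, one_mul]; exact Submodule.Quotient.norm_mk_le S m
  · rw [ContinuousLinearMap.comp_apply, hgx, hπx]
  · rw [ContinuousLinearMap.comp_apply, Submodule.mkQL_apply, Submodule.mkQ_apply,
      (Submodule.Quotient.mk_eq_zero S).2 (Submodule.mem_span_singleton_self y), map_zero]

namespace IsCompatSIP

variable {sip : X → X → 𝕜} (hsip : IsCompatSIP 𝕜 sip)
include hsip

theorem apply_self (x : X) : sip x x = (‖x‖ : 𝕜) ^ 2 := by
  rcases eq_or_ne x 0 with rfl | hx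
  · simp [hsip.1]
  obtain ⟨φ, hφ⟩ := exists_suppFunc (𝕜 := 𝕜) hx
  rw [hsip.2 x x φ hφ, hφ.2, sq]

theorem apply_eq_zero_of_bjOrth {x y : X} (hx : x ≠ 0) (h : BJOrth 𝕜 x y) : sip y x = 0 := by
  obtain ⟨φ, hφ, hφy⟩ := h.exists_suppFunc_apply_eq_zero hx
  rw [hsip.2 y x φ hφ, hφy, mul_zero]

theorem suppFunc_apply_eq_zero {x y : X} {φ : X →L[𝕜] 𝕜} (hx : x ≠ 0) (hφ : SuppFunc 𝕜 x φ)
    (h : sip y x = 0) : φ y = 0 := by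
  rw [hsip.2 y x φ hφ] at h
  exact (mul_eq_zero.1 h).resolve_left (by simpa using hx)

end IsCompatSIP

section SIPIsometry

variable {Y : Type*} [NormedAddCommGroup Y] [NormedSpace 𝕜 Y]
  {sipX : X → X → 𝕜} {sipY : Y → Y → 𝕜} {f : X → Y}

theorem norm_map_of_norm_sip_map_eq (hX : IsCompatSIP 𝕜 sipX) (hY : IsCompatSIP 𝕜 sipY)
    (hf : ∀ x y : X, ‖sipY (f x) (f y)‖ = ‖sipX x y‖) (x : X) : ‖f x‖ = ‖x‖ := by
  have := hf x x
  rw [hX.apply_self, hY.apply_self, norm_pow, norm_pow, RCLike.norm_ofReal, RCLike.norm_ofReal,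
    abs_norm, abs_norm] at this
  exact (pow_left_inj₀ (norm_nonneg _) (norm_nonneg _) two_ne_zero).1 this

theorem suppFunc_map_apply_eq_zero_of_bjOrth (hX : IsCompatSIP 𝕜 sipX)
    (hY : IsCompatSIP 𝕜 sipY) (hf : ∀ x y : X, ‖sipY (f x) (f y)‖ = ‖sipX x y‖) {u v : X}
    {ψ : Y →L[𝕜] 𝕜} (hv : v ≠ 0) (h : BJOrth 𝕜 v u) (hψ : SuppFunc 𝕜 (f v) ψ) :
    ψ (f u) = 0 := by
  have hfv : f v ≠ 0 := ne_zero_of_norm_ne_zero (by simpa [norm_map_of_norm_sip_map_eq hX hY hf])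
  refine hY.suppFunc_apply_eq_zero hfv hψ (norm_eq_zero.1 ?_)
  rw [hf, hX.apply_eq_zero_of_bjOrth hv h, norm_zero]

end SIPIsometry

end NormedSpace

theorem LinearIndependent.vecCons_of_apply_eq_zero {K V : Type*} [Field K] [AddCommGroup V]
    [Module K V] {n : ℕ} {v : Fin n → V} (hv : LinearIndependent K v) {x : V} (ψ : V →ₗ[K] K)
    (hx : ψ x ≠ 0) (hψ : ∀ i, ψ (v i) = 0) :
    LinearIndependent K (Matrix.vecCons x v) :=
  hv.finCons fun hmem =>
    hx (LinearMap.mem_ker.1 (Submodule.span_le.2 (Set.range_subset_iff.2 hψ) hmem))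

theorem stmt9_general {𝕜 : Type*} [RCLike 𝕜] {X Y : Type*} [NormedAddCommGroup X] [NormedSpace 𝕜 X]
    [NormedAddCommGroup Y] [NormedSpace 𝕜 Y]
    (sipX : X → X → 𝕜) (hX : IsCompatSIP 𝕜 sipX)
    (sipY : Y → Y → 𝕜) (hY : IsCompatSIP 𝕜 sipY)
    (f : X → Y) (hf : ∀ x y : X, ‖sipY (f x) (f y)‖ = ‖sipX x y‖)
    (x y z : X) (hx : ‖x‖ = 1) (hy : ‖y‖ = 1) (hz : ‖z‖ = 1)
    (hxy : BJOrth 𝕜 x y) (hxz : BJOrth 𝕜 x z) (hyz : BJOrth 𝕜 y z) :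
    LinearIndependent 𝕜 ![f x, f y, f z] := by
  have hnorm := norm_map_of_norm_sip_map_eq hX hY hf
  have hfx : f x ≠ 0 := ne_zero_of_norm_ne_zero (by simp [hnorm, hx])
  have hfy : f y ≠ 0 := ne_zero_of_norm_ne_zero (by simp [hnorm, hy])
  have hfz : f z ≠ 0 := ne_zero_of_norm_ne_zero (by simp [hnorm, hz])
  have hx0 : x ≠ 0 := ne_zero_of_norm_ne_zero (by simp [hx])
  have hy0 : y ≠ 0 := ne_zero_of_norm_ne_zero (by simp [hy])
  obtain ⟨ψx, hψx⟩ := exists_suppFunc (𝕜 := 𝕜) hfx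
  obtain ⟨ψy, hψy⟩ := exists_suppFunc (𝕜 := 𝕜) hfy
  have orth {u v : X} {ψ : Y →L[𝕜] 𝕜} (hv : v ≠ 0) (h : BJOrth 𝕜 v u)
      (hψ : SuppFunc 𝕜 (f v) ψ) : ψ (f u) = 0 :=
    suppFunc_map_apply_eq_zero_of_bjOrth hX hY hf hv h hψ
  have hz' : LinearIndependent 𝕜 ![f z] := linearIndependent_unique_iff.2 hfz
  have hyz' : LinearIndependent 𝕜 ![f y, f z] :=
    hz'.vecCons_of_apply_eq_zero (ψy : Y →ₗ[𝕜] 𝕜) (hψy.apply_ne_zero hfy)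
      (Fin.forall_fin_one.2 (orth hy0 hyz hψy))
  exact hyz'.vecCons_of_apply_eq_zero (ψx : Y →ₗ[𝕜] 𝕜) (hψx.apply_ne_zero hfx)
    (Fin.forall_fin_two.2 ⟨orth hx0 hxy hψx, orth hx0 hxz hψx⟩)

theorem stmt9 {𝕜 : Type*} [RCLike 𝕜] {X Y : Type*} [NormedAddCommGroup X] [NormedSpace 𝕜 X]
    [NormedAddCommGroup Y] [NormedSpace 𝕜 Y]
    (hsmX : NormSmooth 𝕜 X) (hsmY : NormSmooth 𝕜 Y)
    (sipX : X → X → 𝕜) (hX : IsCompatSIP 𝕜 sipX)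
    (sipY : Y → Y → 𝕜) (hY : IsCompatSIP 𝕜 sipY)
    (f : X → Y) (hf : ∀ x y : X, ‖sipY (f x) (f y)‖ = ‖sipX x y‖)
    (x y z : X) (hx : ‖x‖ = 1) (hy : ‖y‖ = 1) (hz : ‖z‖ = 1)
    (hxy : BJOrth 𝕜 x y) (hxz : BJOrth 𝕜 x z) (hyz : BJOrth 𝕜 y z) :
    LinearIndependent 𝕜 ![f x, f y, f z] :=
  stmt9_general sipX hX sipY hY f hf x y z hx hy hz hxy hxz hyz
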